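/- arXiv:2603.16480 — 3 statements merged into one kernel-verified Lean document; each statement's English description precedes it below -/
import Mathlib

section
/- Let B_1,…,B_N be measurable subsets of E × ℝ with ν(B_i) > 0, ν(B_i ∩ B_j) = 0 for i ≠ j, and B = ⋃ B_i satisfying ν(Γ[f] \ B) = 0 and ν(B) < ∞. Let U be uniform on [0,1), independent of each pair (V_i, W_i), where (V_i, W_i) has law ν(· ∩ B_i)/ν(B_i). Define Ψ(u) = min{ i : u < Σ_{j≤i} ν(B_j)/ν(B) } and the acceptance event Λ = { (V_{Ψ(U)}, W_{Ψ(U)}) ∈ B_{Ψ(U)} ∩ Γ[f] }. Then for every measurable A ⊆ E, P(V_{Ψ(U)} ∈ A and Λ) = (1/ν(B)) ∫_A f dμ. -/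
open MeasureTheory Set ProbabilityTheory

theorem stmt2 {E : Type*} [MeasurableSpace E] (μ : Measure E) [SigmaFinite μ]
    (f : E → ℝ) (hf : Measurable f) (hf0 : ∀ x, 0 ≤ f x)
    (hKpos : 0 < ∫ x, f x ∂μ) (hfint : Integrable f μ)
    (ν : Measure (E × ℝ)) (hν : ν = μ.prod volume)
    (Γ : Set (E × ℝ)) (hΓ : Γ = {p : E × ℝ | 0 ≤ p.2 ∧ p.2 ≤ f p.1})
    (N : ℕ) (B : Fin N → Set (E × ℝ)) (hBm : ∀ i, MeasurableSet (B i))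
    (hBpos : ∀ i, 0 < ν (B i))
    (hdisj : ∀ i j, i ≠ j → ν (B i ∩ B j) = 0)
    (Bu : Set (E × ℝ)) (hBu : Bu = ⋃ i, B i)
    (hcover : ν (Γ \ Bu) = 0) (hfin : ν Bu < ⊤)
    {Ω : Type*} [MeasurableSpace Ω] (P : Measure Ω) [IsProbabilityMeasure P]
    (U : Ω → ℝ) (V : Fin N → Ω → E) (W : Fin N → Ω → ℝ)
    (hU : Measurable U) (hVW : ∀ i, Measurable (fun ω => (V i ω, W i ω)))
    (hUlaw : Measure.map U P = volume.restrict (Ico (0:ℝ) 1))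
    (hVWlaw : ∀ i, Measure.map (fun ω => (V i ω, W i ω)) P
      = (ν (B i))⁻¹ • ν.restrict (B i))
    (hindep : ∀ i, IndepFun U (fun ω => (V i ω, W i ω)) P)
    (Ψ : ℝ → Fin N)
    (hΨ : ∀ u ∈ Ico (0:ℝ) 1, ∀ i, Ψ u = i ↔
      (u < ∑ j ∈ Finset.univ.filter (· ≤ i), (ν (B j)).toReal / (ν Bu).toReal ∧
       ∀ k < i, ¬ u < ∑ j ∈ Finset.univ.filter (· ≤ k), (ν (B j)).toReal / (ν Bu).toReal))
    (A : Set E) (hA : MeasurableSet A) :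
    P {ω | V (Ψ (U ω)) ω ∈ A ∧ (V (Ψ (U ω)) ω, W (Ψ (U ω)) ω) ∈ B (Ψ (U ω)) ∩ Γ}
      = ENNReal.ofReal (∫ x in A, f x ∂μ) / ν Bu := by
  classical
  -- basic facts
  have hN : 0 < N := (Ψ 0).pos
  have hBsub : ∀ i, B i ⊆ Bu := by intro i; rw [hBu]; exact subset_iUnion B i
  have hBfin : ∀ i, ν (B i) < ⊤ := fun i => lt_of_le_of_lt (measure_mono (hBsub i)) hfin
  have hBupos : 0 < ν Bu := lt_of_lt_of_le (hBpos ⟨0, hN⟩) (measure_mono (hBsub ⟨0, hN⟩))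
  have hBusum : ν Bu = ∑ i, ν (B i) := by
    rw [hBu, measure_iUnion₀ (fun i j hij => hdisj i j hij)
      (fun i => (hBm i).nullMeasurableSet), tsum_fintype]
  have hΓm : MeasurableSet Γ := by
    rw [hΓ]
    exact (measurableSet_le measurable_const measurable_snd).inter
      (measurableSet_le measurable_snd (hf.comp measurable_fst))
  -- the cut points
  set t : Fin N → ℝ := fun j => (ν (B j)).toReal / (ν Bu).toReal with ht
  have ht0 : ∀ j, 0 ≤ t j := fun j => div_nonneg ENNReal.toReal_nonneg ENNReal.toReal_nonneg
  have htsum : ∑ j, t j = 1 := by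
    simp only [ht]
    rw [← Finset.sum_div, ← ENNReal.toReal_sum (fun j _ => (hBfin j).ne), ← hBusum,
      div_self (ENNReal.toReal_pos hBupos.ne' hfin.ne).ne']
  set c : Fin N → ℝ := fun i => ∑ j ∈ Finset.univ.filter (· ≤ i), t j with hc
  set a : Fin N → ℝ := fun i => ∑ j ∈ Finset.univ.filter (· < i), t j with ha
  have ha0 : ∀ i, 0 ≤ a i := fun i => Finset.sum_nonneg fun j _ => ht0 j
  have hc1 : ∀ i, c i ≤ 1 := by
    intro i; rw [← htsum]
    exact Finset.sum_le_sum_of_subset_of_nonneg (Finset.filter_subset _ _) fun j _ _ => ht0 j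
  have hca : ∀ i, c i = a i + t i := by
    intro i
    have hins : Finset.univ.filter (· ≤ i) = insert i (Finset.univ.filter (· < i)) := by
      ext j; simp [le_iff_lt_or_eq, or_comm]
    simp only [hc, ha]; rw [hins, Finset.sum_insert (by simp), add_comm]
  have hclea : ∀ i j : Fin N, i < j → c i ≤ a j := by
    intro i j hij
    exact Finset.sum_le_sum_of_subset_of_nonneg
      (by intro k hk; simp only [Finset.mem_filter, Finset.mem_univ, true_and] at *
          exact lt_of_le_of_lt hk hij) (fun k _ _ => ht0 k)
  have haltc : ∀ i, a i ≤ c i := fun i => by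
    rw [hca i]; linarith [ht0 i]
  -- the key interval identity
  have hIco : ∀ i, {u | u ∈ Ico (0:ℝ) 1 ∧ Ψ u = i} = Ico (a i) (c i) := by
    intro i
    ext u
    simp only [mem_setOf_eq, mem_Ico]
    constructor
    · rintro ⟨hu, hi⟩
      rw [hΨ u hu i] at hi
      obtain ⟨h1, h2⟩ := hi
      refine ⟨?_, h1⟩
      by_cases h : (i : ℕ) = 0
      · have : Finset.univ.filter (· < i) = (∅ : Finset (Fin N)) := by
          ext j; simp [Fin.lt_def, h]
        simp only [ha, this, Finset.sum_empty]; exact hu.1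
      · have hk : (⟨(i : ℕ) - 1, lt_trans (Nat.pred_lt h) i.isLt⟩ : Fin N) < i := by
          simp [Fin.lt_def]; omega
        have := h2 _ hk
        push_neg at this
        refine le_trans (le_of_eq ?_) this
        simp only [ha]
        apply Finset.sum_congr _ fun _ _ => rfl
        ext j
        simp only [Finset.mem_filter, Finset.mem_univ, true_and, Fin.lt_def, Fin.le_def]
        omega
    · rintro ⟨h1, h2⟩
      have hu : u ∈ Ico (0:ℝ) 1 := ⟨le_trans (ha0 i) h1, lt_of_lt_of_le h2 (hc1 i)⟩
      refine ⟨hu, (hΨ u hu i).mpr ⟨h2, fun k hk => not_lt.mpr (le_trans (hclea k i hk) h1)⟩⟩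
  -- the sets
  set C : Fin N → Set (E × ℝ) := fun i => (A ×ˢ (univ : Set ℝ)) ∩ Γ ∩ B i with hCdef
  have hCm : ∀ i, MeasurableSet (C i) :=
    fun i => ((hA.prod MeasurableSet.univ).inter hΓm).inter (hBm i)
  have hCsub : ∀ i, C i ⊆ B i := fun i => inter_subset_right
  set D : Fin N → Set Ω :=
    fun i => U ⁻¹' (Ico (a i) (c i)) ∩ (fun ω => (V i ω, W i ω)) ⁻¹' (C i) with hDdef
  set G : Set Ω := U ⁻¹' (Ico (0:ℝ) 1) with hGdef
  have hGnull : P Gᶜ = 0 := by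
    have : Gᶜ = U ⁻¹' (Ico (0:ℝ) 1)ᶜ := rfl
    rw [this, ← Measure.map_apply hU measurableSet_Ico.compl, hUlaw,
      Measure.restrict_apply measurableSet_Ico.compl, compl_inter_self, measure_empty]
  -- rewrite the event
  set S : Set Ω :=
    {ω | V (Ψ (U ω)) ω ∈ A ∧ (V (Ψ (U ω)) ω, W (Ψ (U ω)) ω) ∈ B (Ψ (U ω)) ∩ Γ} with hSdef
  have hSG : S ∩ G = (⋃ i, D i) ∩ G := by
    ext ω
    simp only [hSdef, hDdef, mem_inter_iff, mem_setOf_eq, mem_iUnion, mem_preimage]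
    constructor
    · rintro ⟨⟨h1, h2, h3⟩, hG⟩
      refine ⟨⟨Ψ (U ω), ?_, ⟨⟨h1, trivial⟩, h3⟩, h2⟩, hG⟩
      have : U ω ∈ {u | u ∈ Ico (0:ℝ) 1 ∧ Ψ u = Ψ (U ω)} := ⟨hG, rfl⟩
      rwa [hIco] at this
    · rintro ⟨⟨i, hIui, ⟨⟨h1, -⟩, h3⟩, h2⟩, hG⟩
      have : U ω ∈ Ico (a i) (c i) := hIui
      rw [← hIco] at this
      obtain ⟨-, hΨi⟩ := this
      exact ⟨by rw [hΨi]; exact ⟨h1, h2, h3⟩, hG⟩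
  have hDm : ∀ i, MeasurableSet (D i) :=
    fun i => (hU measurableSet_Ico).inter ((hVW i) (hCm i))
  have hkey : ∀ i j : Fin N, i < j → Disjoint (Ico (a i) (c i)) (Ico (a j) (c j)) :=
    fun i j h => Set.Ico_disjoint_Ico.mpr
      (le_trans (min_le_left _ _) (le_trans (hclea i j h) (le_max_right _ _)))
  have hDd : Pairwise (Function.onFun Disjoint D) := by
    intro i j hij
    have hd : Disjoint (Ico (a i) (c i)) (Ico (a j) (c j)) := by
      rcases hij.lt_or_gt with h | h
      · exact hkey i j h
      · exact (hkey j i h).symm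
    exact Disjoint.preimage U hd |>.mono (inter_subset_left) (inter_subset_left)
  -- compute P (D i)
  have hPU : ∀ i, P (U ⁻¹' (Ico (a i) (c i))) = ν (B i) / ν Bu := by
    intro i
    rw [← Measure.map_apply hU measurableSet_Ico, hUlaw,
      Measure.restrict_apply measurableSet_Ico]
    have hsub : Ico (a i) (c i) ∩ Ico (0:ℝ) 1 = Ico (a i) (c i) := by
      rw [inter_eq_left]
      intro u hu
      exact ⟨le_trans (ha0 i) hu.1, lt_of_lt_of_le hu.2 (hc1 i)⟩
    rw [hsub, Real.volume_Ico]
    have : c i - a i = t i := by rw [hca i]; ring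
    rw [this]
    simp only [ht]
    rw [ENNReal.ofReal_div_of_pos (ENNReal.toReal_pos hBupos.ne' hfin.ne),
      ENNReal.ofReal_toReal (hBfin i).ne, ENNReal.ofReal_toReal hfin.ne]
  have hPVW : ∀ i, P ((fun ω => (V i ω, W i ω)) ⁻¹' (C i)) = (ν (B i))⁻¹ * ν (C i) := by
    intro i
    rw [← Measure.map_apply (hVW i) (hCm i), hVWlaw i, Measure.smul_apply,
      Measure.restrict_apply (hCm i), inter_eq_left.mpr (hCsub i), smul_eq_mul]
  have hPD : ∀ i, P (D i) = ν (C i) / ν Bu := by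
    intro i
    rw [hDdef]
    rw [(hindep i).measure_inter_preimage_eq_mul _ _ measurableSet_Ico (hCm i), hPU i, hPVW i]
    have h0 : ν (B i) ≠ 0 := (hBpos i).ne'
    have htop : ν (B i) ≠ ⊤ := (hBfin i).ne
    rw [div_eq_mul_inv, div_eq_mul_inv]
    calc ν (B i) * (ν Bu)⁻¹ * ((ν (B i))⁻¹ * ν (C i))
        = ν (B i) * (ν (B i))⁻¹ * (ν (C i) * (ν Bu)⁻¹) := by ring
      _ = ν (C i) * (ν Bu)⁻¹ := by rw [ENNReal.mul_inv_cancel h0 htop, one_mul]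
  -- sum up
  have hCU : (⋃ i, C i) = (A ×ˢ (univ : Set ℝ)) ∩ Γ ∩ Bu := by
    rw [hCdef, ← inter_iUnion, hBu]
  have hCsum : ∑ i, ν (C i) = ν ((A ×ˢ (univ : Set ℝ)) ∩ Γ) := by
    rw [← tsum_fintype (L := SummationFilter.unconditional _), ← measure_iUnion₀
      (fun i j hij => measure_mono_null (inter_subset_inter inter_subset_right inter_subset_right) (hdisj i j hij))
      (fun i => (hCm i).nullMeasurableSet), hCU]
    exact measure_inter_conull' (measure_mono_null (diff_subset_diff_left inter_subset_right) hcover)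
  -- compute the product measure
  have hgeom : ν ((A ×ˢ (univ : Set ℝ)) ∩ Γ) = ENNReal.ofReal (∫ x in A, f x ∂μ) := by
    rw [hν, Measure.prod_apply ((hA.prod MeasurableSet.univ).inter hΓm)]
    calc ∫⁻ x, volume (Prod.mk x ⁻¹' ((A ×ˢ (univ : Set ℝ)) ∩ Γ)) ∂μ
        = ∫⁻ x, A.indicator (fun x => ENNReal.ofReal (f x)) x ∂μ := by
          apply lintegral_congr
          intro x
          by_cases hx : x ∈ A
          · have : Prod.mk x ⁻¹' ((A ×ˢ (univ : Set ℝ)) ∩ Γ) = Icc 0 (f x) := by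
              ext y; simp [hΓ, hx]
            rw [this, Real.volume_Icc, indicator_of_mem hx]
            simp
          · have : Prod.mk x ⁻¹' ((A ×ˢ (univ : Set ℝ)) ∩ Γ) = ∅ := by
              ext y; simp [hΓ, hx]
            rw [this, indicator_of_notMem hx, measure_empty]
      _ = ∫⁻ x in A, ENNReal.ofReal (f x) ∂μ := lintegral_indicator hA _
      _ = ENNReal.ofReal (∫ x in A, f x ∂μ) := by
          rw [ofReal_integral_eq_lintegral_ofReal (hfint.restrict)
            (Filter.Eventually.filter_mono (ae_mono Measure.restrict_le_self) (ae_of_all _ hf0))]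
  -- conclude
  calc P S = P (S ∩ G) := (measure_inter_conull hGnull).symm
    _ = P ((⋃ i, D i) ∩ G) := by rw [hSG]
    _ = P (⋃ i, D i) := measure_inter_conull hGnull
    _ = ∑' i, P (D i) := measure_iUnion hDd hDm
    _ = ∑ i, P (D i) := tsum_fintype _
    _ = ∑ i, ν (C i) / ν Bu := by exact Finset.sum_congr rfl fun i _ => hPD i
    _ = (∑ i, ν (C i)) / ν Bu := by simp only [div_eq_mul_inv, ← Finset.sum_mul]
    _ = ENNReal.ofReal (∫ x in A, f x ∂μ) / ν Bu := by rw [hCsum, hgeom]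
end

section
/- Under the hypotheses of the pattern block method, the acceptance probability equals P(Λ) = K / ν(B) > 0, where K = ∫_E f dμ and Λ is the acceptance event { (V_{Ψ(U)}, W_{Ψ(U)}) ∈ B_{Ψ(U)} ∩ Γ[f] }. -/
/-!
Split `[0,1)` into consecutive intervals of lengths `ν(Bᵢ)/ν(B)`; on `[0,1)` the index `Ψ(U)` is
`i` exactly when `U` lies in the `i`-th interval. Conditioning on that interval and using the
independence of `U` and `(Vᵢ, Wᵢ)`, the acceptance probability is
`∑ᵢ ν(Bᵢ)/ν(B) · ν(Bᵢ ∩ Γ[f])/ν(Bᵢ) = ν(B ∩ Γ[f])/ν(B)`. Since the blocks cover `Γ[f]` up to a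
null set, this is `ν(Γ[f])/ν(B)`, and by Tonelli `ν(Γ[f]) = ∫ f dμ = K`.
-/

open MeasureTheory Set ProbabilityTheory

open scoped ENNReal

theorem measurableSet_subgraph {E : Type*} [MeasurableSpace E] {f : E → ℝ} (hf : Measurable f) :
    MeasurableSet {p : E × ℝ | 0 ≤ p.2 ∧ p.2 ≤ f p.1} :=
  (measurableSet_le measurable_const measurable_snd).inter
    (measurableSet_le measurable_snd (hf.comp measurable_fst))

theorem prod_volume_subgraph {E : Type*} [MeasurableSpace E] (μ : Measure E) {f : E → ℝ}
    (hf : Measurable f) :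
    μ.prod volume {p : E × ℝ | 0 ≤ p.2 ∧ p.2 ≤ f p.1} = ∫⁻ x, ENNReal.ofReal (f x) ∂μ := by
  rw [Measure.prod_apply (measurableSet_subgraph hf)]
  refine lintegral_congr fun x => ?_
  have hslice : Prod.mk x ⁻¹' {p : E × ℝ | 0 ≤ p.2 ∧ p.2 ≤ f p.1} = Icc 0 (f x) := rfl
  rw [hslice, Real.volume_Icc, sub_zero]

def partialSumIco {ι : Type*} [Preorder ι] [LocallyFiniteOrderBot ι] (t : ι → ℝ) (i : ι) :
    Set ℝ :=
  Ico (∑ j ∈ Finset.Iio i, t j) (∑ j ∈ Finset.Iic i, t j)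

section PartialSums

variable {ι : Type*} [LinearOrder ι] [LocallyFiniteOrderBot ι] {t : ι → ℝ}

theorem sum_Iic_eq_sum_Iio_add (t : ι → ℝ) (i : ι) :
    ∑ j ∈ Finset.Iic i, t j = ∑ j ∈ Finset.Iio i, t j + t i := by
  rw [← Finset.Iio_insert, Finset.sum_insert Finset.notMem_Iio_self, add_comm]

theorem volume_partialSumIco (t : ι → ℝ) (i : ι) :
    volume (partialSumIco t i) = ENNReal.ofReal (t i) := by
  rw [partialSumIco, Real.volume_Ico, sum_Iic_eq_sum_Iio_add, add_sub_cancel_left]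

theorem partialSumIco_subset_Ico [Fintype ι] (ht : ∀ j, 0 ≤ t j) (ht1 : ∑ j, t j = 1) (i : ι) :
    partialSumIco t i ⊆ Ico 0 1 := fun _ hu =>
  ⟨(Finset.sum_nonneg fun j _ => ht j).trans hu.1,
    hu.2.trans_le (ht1 ▸ Finset.sum_le_univ_sum_of_nonneg ht)⟩

theorem mem_partialSumIco_iff [PredOrder ι] (ht : ∀ j, 0 ≤ t j) {u : ℝ} (hu : 0 ≤ u) (i : ι) :
    u ∈ partialSumIco t i ↔
      u < ∑ j ∈ Finset.Iic i, t j ∧ ∀ k < i, ¬ u < ∑ j ∈ Finset.Iic k, t j := by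
  simp only [partialSumIco, mem_Ico, not_lt]
  constructor
  · rintro ⟨hlo, hhi⟩
    refine ⟨hhi, fun k hk => le_trans ?_ hlo⟩
    refine Finset.sum_le_sum_of_subset_of_nonneg (fun j hj => ?_) fun j _ _ => ht j
    exact Finset.mem_Iio.2 ((Finset.mem_Iic.1 hj).trans_lt hk)
  · rintro ⟨hhi, hfirst⟩
    refine ⟨?_, hhi⟩
    by_cases hmin : IsMin i
    · rwa [Finset.Iio_eq_empty.2 hmin, Finset.sum_empty]
    · have hIio : Finset.Iio i = Finset.Iic (Order.pred i) := by
        ext j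
        rw [Finset.mem_Iio, Finset.mem_Iic, Order.le_pred_iff_of_not_isMin hmin]
      rw [hIio]
      exact hfirst _ (Order.pred_lt_of_not_isMin hmin)

end PartialSums

theorem measure_setOf_mem_eq_tsum {Ω ι : Type*} [MeasurableSpace Ω] [Countable ι]
    (P : Measure Ω) (Z : Ω → ι) {C D : ι → Set Ω} (hC : ∀ i, MeasurableSet (C i))
    (hD : ∀ i, MeasurableSet (D i)) (hZ : ∀ᵐ ω ∂P, ∀ i, Z ω = i ↔ ω ∈ C i) :
    P {ω | ω ∈ D (Z ω)} = ∑' i, P (C i ∩ D i) := by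
  have hae : {ω | ω ∈ D (Z ω)} =ᵐ[P] ⋃ i, C i ∩ D i := by
    filter_upwards [hZ] with ω hω
    show (ω ∈ D (Z ω)) = (ω ∈ ⋃ i, C i ∩ D i)
    rw [mem_iUnion, eq_iff_iff]
    exact ⟨fun h => ⟨Z ω, (hω _).1 rfl, h⟩, fun ⟨i, hi, h⟩ => (hω i).2 hi ▸ h⟩
  refine (measure_congr hae).trans (measure_iUnion₀ (fun i j hij => ?_)
    fun i => ((hC i).inter (hD i)).nullMeasurableSet)
  refine measure_mono_null (t := {ω | ¬ ∀ k, Z ω = k ↔ ω ∈ C k}) ?_ (ae_iff.1 hZ)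
  rintro ω ⟨⟨hi, -⟩, hj, -⟩ hZω
  exact hij (((hZω i).2 hi).symm.trans ((hZω j).2 hj))

theorem measure_eq_tsum_inter_of_cover {α ι : Type*} [MeasurableSpace α] [Countable ι]
    (ν : Measure α) {B : ι → Set α} (hBm : ∀ i, MeasurableSet (B i))
    (hdisj : ∀ i j, i ≠ j → ν (B i ∩ B j) = 0) {S : Set α} (hS : MeasurableSet S)
    (hcover : ν (S \ ⋃ i, B i) = 0) :
    ν S = ∑' i, ν (B i ∩ S) := by
  rw [← measure_inter_add_sdiff S (MeasurableSet.iUnion hBm), hcover, add_zero, inter_comm,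
    iUnion_inter]
  refine measure_iUnion₀ (fun i j hij => ?_) fun i => ((hBm i).inter hS).nullMeasurableSet
  exact measure_mono_null (inter_subset_inter inter_subset_left inter_subset_left) (hdisj i j hij)

theorem ofReal_toReal_div_mul_cond_apply {α : Type*} [MeasurableSpace α] (ν : Measure α)
    {A : Set α} (hA : MeasurableSet A) (hAfin : ν A ≠ ⊤) {c : ℝ≥0∞} (hc : c ≠ 0) (S : Set α) :
    ENNReal.ofReal ((ν A).toReal / c.toReal) * ν[S | A] = c⁻¹ * ν (A ∩ S) := by
  rw [← ENNReal.toReal_div, ENNReal.ofReal_toReal (ENNReal.div_ne_top hAfin hc),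
    ENNReal.div_eq_inv_mul, mul_assoc, mul_comm (ν A), cond_mul_eq_inter' hA hAfin]

theorem measure_selected_mem_of_uniform {Ω ι α : Type*} [MeasurableSpace Ω] [MeasurableSpace α]
    [Fintype ι] [LinearOrder ι] [LocallyFiniteOrderBot ι] [PredOrder ι] (P : Measure Ω)
    {U : Ω → ℝ} (hU : Measurable U) (hUlaw : P.map U = volume.restrict (Ico 0 1))
    {t : ι → ℝ} (ht0 : ∀ j, 0 ≤ t j) (ht1 : ∑ j, t j = 1) {Ψ : ℝ → ι}
    (hΨ : ∀ u ∈ Ico (0 : ℝ) 1, ∀ i, Ψ u = i ↔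
      (u < ∑ j ∈ Finset.Iic i, t j ∧ ∀ k < i, ¬ u < ∑ j ∈ Finset.Iic k, t j))
    {Y : ι → Ω → α} (hY : ∀ i, Measurable (Y i)) {S : ι → Set α}
    (hS : ∀ i, MeasurableSet (S i)) (hindep : ∀ i, IndepFun U (Y i) P) :
    P {ω | Y (Ψ (U ω)) ω ∈ S (Ψ (U ω))} = ∑ i, ENNReal.ofReal (t i) * P.map (Y i) (S i) := by
  have hA : ∀ i, MeasurableSet (partialSumIco t i) := fun _ => measurableSet_Ico
  have hsel : ∀ᵐ ω ∂P, ∀ i, Ψ (U ω) = i ↔ ω ∈ U ⁻¹' partialSumIco t i := by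
    have hU01 : ∀ᵐ ω ∂P, U ω ∈ Ico (0 : ℝ) 1 :=
      ae_of_ae_map hU.aemeasurable (hUlaw ▸ ae_restrict_mem measurableSet_Ico)
    filter_upwards [hU01] with ω hω i
    rw [hΨ _ hω i, mem_preimage, mem_partialSumIco_iff ht0 hω.1]
  refine (measure_setOf_mem_eq_tsum P (Ψ ∘ U) (fun i => hU (hA i)) (fun i => hY i (hS i))
    hsel).trans ?_
  rw [tsum_fintype]
  refine Finset.sum_congr rfl fun i _ => ?_
  rw [(hindep i).measure_inter_preimage_eq_mul _ _ (hA i) (hS i),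
    ← Measure.map_apply hU (hA i), ← Measure.map_apply (hY i) (hS i), hUlaw,
    Measure.restrict_apply' measurableSet_Ico,
    inter_eq_left.2 (partialSumIco_subset_Ico ht0 ht1 i), volume_partialSumIco]

theorem stmt3_general {E : Type*} [MeasurableSpace E] (μ : Measure E)
    (f : E → ℝ) (hf : Measurable f) (hf0 : ∀ x, 0 ≤ f x)
    (K : ℝ) (hK : K = ∫ x, f x ∂μ) (hKpos : 0 < K) (hfint : Integrable f μ)
    (ν : Measure (E × ℝ)) (hν : ν = μ.prod volume)
    (Γ : Set (E × ℝ)) (hΓ : Γ = {p : E × ℝ | 0 ≤ p.2 ∧ p.2 ≤ f p.1})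
    (N : ℕ) (B : Fin N → Set (E × ℝ)) (hBm : ∀ i, MeasurableSet (B i))
    (hdisj : ∀ i j, i ≠ j → ν (B i ∩ B j) = 0)
    (Bu : Set (E × ℝ)) (hBu : Bu = ⋃ i, B i)
    (hcover : ν (Γ \ Bu) = 0) (hfin : ν Bu < ⊤)
    {Ω : Type*} [MeasurableSpace Ω] (P : Measure Ω)
    (U : Ω → ℝ) (V : Fin N → Ω → E) (W : Fin N → Ω → ℝ)
    (hU : Measurable U) (hVW : ∀ i, Measurable (fun ω => (V i ω, W i ω)))
    (hUlaw : Measure.map U P = volume.restrict (Ico (0:ℝ) 1))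
    (hVWlaw : ∀ i, Measure.map (fun ω => (V i ω, W i ω)) P
      = (ν (B i))⁻¹ • ν.restrict (B i))
    (hindep : ∀ i, IndepFun U (fun ω => (V i ω, W i ω)) P)
    (Ψ : ℝ → Fin N)
    (hΨ : ∀ u ∈ Ico (0:ℝ) 1, ∀ i, Ψ u = i ↔
      (u < ∑ j ∈ Finset.univ.filter (· ≤ i), (ν (B j)).toReal / (ν Bu).toReal ∧
       ∀ k < i, ¬ u < ∑ j ∈ Finset.univ.filter (· ≤ k), (ν (B j)).toReal / (ν Bu).toReal)) :
    P {ω | (V (Ψ (U ω)) ω, W (Ψ (U ω)) ω) ∈ B (Ψ (U ω)) ∩ Γ}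
        = ENNReal.ofReal K / ν Bu ∧
      0 < P {ω | (V (Ψ (U ω)) ω, W (Ψ (U ω)) ω) ∈ B (Ψ (U ω)) ∩ Γ} := by
  have hΓm : MeasurableSet Γ := hΓ ▸ measurableSet_subgraph hf
  have hνΓ : ν Γ = ENNReal.ofReal K := by
    rw [hν, hΓ, prod_volume_subgraph μ hf, hK,
      ofReal_integral_eq_lintegral_ofReal hfint (ae_of_all _ hf0)]
  have hνΓ_sum : ν Γ = ∑ i, ν (B i ∩ Γ) := by
    rw [measure_eq_tsum_inter_of_cover ν hBm hdisj hΓm (hBu ▸ hcover), tsum_fintype]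
  have hΓ_pos : 0 < ν Γ := hνΓ ▸ ENNReal.ofReal_pos.2 hKpos
  have hBu0 : ν Bu ≠ 0 := (hΓ_pos.trans_le (measure_mono_ae (ae_le_set.2 hcover))).ne'
  have hBfin : ∀ i, ν (B i) ≠ ⊤ := fun i =>
    ((measure_mono (hBu ▸ subset_iUnion B i)).trans_lt hfin).ne
  have hνBu : ν Bu = ∑ i, ν (B i) := by
    rw [hBu, measure_iUnion₀ hdisj (fun i => (hBm i).nullMeasurableSet), tsum_fintype]
  set t : Fin N → ℝ := fun j => (ν (B j)).toReal / (ν Bu).toReal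
  have ht1 : ∑ j, t j = 1 := by
    rw [← Finset.sum_div, ← ENNReal.toReal_sum fun j _ => hBfin j, ← hνBu]
    exact div_self (ENNReal.toReal_pos hBu0 hfin.ne).ne'
  have hterm : ∀ i, ENNReal.ofReal (t i) * P.map (fun ω => (V i ω, W i ω)) (B i ∩ Γ)
      = (ν Bu)⁻¹ * ν (B i ∩ Γ) := fun i => by
    rw [hVWlaw, ← ProbabilityTheory.cond,
      ofReal_toReal_div_mul_cond_apply ν (hBm i) (hBfin i) hBu0, ← inter_assoc, inter_self]
  simp only [Finset.filter_ge_eq_Iic] at hΨ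
  have hacc : P {ω | (V (Ψ (U ω)) ω, W (Ψ (U ω)) ω) ∈ B (Ψ (U ω)) ∩ Γ}
      = ENNReal.ofReal K / ν Bu := by
    rw [measure_selected_mem_of_uniform P hU hUlaw (fun j => by positivity) ht1 hΨ hVW
      (fun i => (hBm i).inter hΓm) hindep, Finset.sum_congr rfl fun i _ => hterm i,
      ← Finset.mul_sum, ← hνΓ_sum, hνΓ, ENNReal.div_eq_inv_mul]
  exact ⟨hacc, hacc ▸ hνΓ ▸ ENNReal.div_pos hΓ_pos.ne' hfin.ne⟩

theorem stmt3 {E : Type*} [MeasurableSpace E] (μ : Measure E) [SigmaFinite μ]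
    (f : E → ℝ) (hf : Measurable f) (hf0 : ∀ x, 0 ≤ f x)
    (K : ℝ) (hK : K = ∫ x, f x ∂μ) (hKpos : 0 < K) (hfint : Integrable f μ)
    (ν : Measure (E × ℝ)) (hν : ν = μ.prod volume)
    (Γ : Set (E × ℝ)) (hΓ : Γ = {p : E × ℝ | 0 ≤ p.2 ∧ p.2 ≤ f p.1})
    (N : ℕ) (B : Fin N → Set (E × ℝ)) (hBm : ∀ i, MeasurableSet (B i))
    (hBpos : ∀ i, 0 < ν (B i))
    (hdisj : ∀ i j, i ≠ j → ν (B i ∩ B j) = 0)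
    (Bu : Set (E × ℝ)) (hBu : Bu = ⋃ i, B i)
    (hcover : ν (Γ \ Bu) = 0) (hfin : ν Bu < ⊤)
    {Ω : Type*} [MeasurableSpace Ω] (P : Measure Ω) [IsProbabilityMeasure P]
    (U : Ω → ℝ) (V : Fin N → Ω → E) (W : Fin N → Ω → ℝ)
    (hU : Measurable U) (hVW : ∀ i, Measurable (fun ω => (V i ω, W i ω)))
    (hUlaw : Measure.map U P = volume.restrict (Ico (0:ℝ) 1))
    (hVWlaw : ∀ i, Measure.map (fun ω => (V i ω, W i ω)) P
      = (ν (B i))⁻¹ • ν.restrict (B i))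
    (hindep : ∀ i, IndepFun U (fun ω => (V i ω, W i ω)) P)
    (Ψ : ℝ → Fin N)
    (hΨ : ∀ u ∈ Ico (0:ℝ) 1, ∀ i, Ψ u = i ↔
      (u < ∑ j ∈ Finset.univ.filter (· ≤ i), (ν (B j)).toReal / (ν Bu).toReal ∧
       ∀ k < i, ¬ u < ∑ j ∈ Finset.univ.filter (· ≤ k), (ν (B j)).toReal / (ν Bu).toReal)) :
    P {ω | (V (Ψ (U ω)) ω, W (Ψ (U ω)) ω) ∈ B (Ψ (U ω)) ∩ Γ}
        = ENNReal.ofReal K / ν Bu ∧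
      0 < P {ω | (V (Ψ (U ω)) ω, W (Ψ (U ω)) ω) ∈ B (Ψ (U ω)) ∩ Γ} :=
  stmt3_general μ f hf hf0 K hK hKpos hfint ν hν Γ hΓ N B hBm hdisj Bu hBu hcover hfin P U V W hU
    hVW hUlaw hVWlaw hindep Ψ hΨ
end

section
/- Under the hypotheses of the pattern block method, the conditional law of V_{Ψ(U)} given the acceptance event Λ has density f/K with respect to μ: for every measurable A ⊆ E, P(V_{Ψ(U)} ∈ A | Λ) = (1/K) ∫_A f dμ. -/
open MeasureTheory Set ProbabilityTheory

lemma pb_filter_le_eq {N : ℕ} (i : Fin N) :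
    Finset.univ.filter (· ≤ i) = insert i (Finset.univ.filter (· < i)) := by
  ext j
  simp [le_iff_lt_or_eq, or_comm]

lemma pb_sum_le_eq {N : ℕ} (g : Fin N → ℝ) (i : Fin N) :
    ∑ j ∈ Finset.univ.filter (· ≤ i), g j
      = (∑ j ∈ Finset.univ.filter (· < i), g j) + g i := by
  rw [pb_filter_le_eq, Finset.sum_insert (by simp)]
  ring

lemma pb_mono {N : ℕ} (g : Fin N → ℝ) (hg : ∀ j, 0 ≤ g j) {k i : Fin N} (h : k < i) :
    ∑ j ∈ Finset.univ.filter (· ≤ k), g j ≤ ∑ j ∈ Finset.univ.filter (· < i), g j := by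
  apply Finset.sum_le_sum_of_subset_of_nonneg
  · intro j hj
    simp only [Finset.mem_filter, Finset.mem_univ, true_and] at *
    exact lt_of_le_of_lt hj h
  · intros; exact hg _

lemma pb_lb {N : ℕ} (g : Fin N → ℝ) (hg : ∀ j, 0 ≤ g j) (i : Fin N)
    {u : ℝ} (h0 : 0 ≤ u)
    (h2 : ∀ k < i, ¬ u < ∑ j ∈ Finset.univ.filter (· ≤ k), g j) :
    ∑ j ∈ Finset.univ.filter (· < i), g j ≤ u := by
  rcases Nat.eq_zero_or_pos i.val with h | h
  · have he : Finset.univ.filter (· < i) = ∅ := by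
      apply Finset.filter_eq_empty_iff.mpr
      intro j _
      simp only [Fin.lt_def, h]
      omega
    simp [he, h0]
  · have hlt : i.val - 1 < N := lt_of_le_of_lt (Nat.sub_le _ _) i.isLt
    set k : Fin N := ⟨i.val - 1, hlt⟩ with hk
    have hki : k < i := by
      simp only [Fin.lt_def, hk]
      omega
    have heq : Finset.univ.filter (· ≤ k) = Finset.univ.filter (· < i) := by
      ext j
      simp only [Finset.mem_filter, Finset.mem_univ, true_and, Fin.le_def, Fin.lt_def, hk]
      omega
    have := h2 k hki
    rw [heq] at this
    linarith

lemma pb_interval {N : ℕ} (g : Fin N → ℝ) (hg : ∀ j, 0 ≤ g j) (Ψ : ℝ → Fin N)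
    (hΨ : ∀ u ∈ Ico (0:ℝ) 1, ∀ i, Ψ u = i ↔
      (u < ∑ j ∈ Finset.univ.filter (· ≤ i), g j ∧
       ∀ k < i, ¬ u < ∑ j ∈ Finset.univ.filter (· ≤ k), g j))
    (u : ℝ) (hu : u ∈ Ico (0:ℝ) 1) (i : Fin N) :
    Ψ u = i ↔ u ∈ Ico (∑ j ∈ Finset.univ.filter (· < i), g j)
                      (∑ j ∈ Finset.univ.filter (· ≤ i), g j) := by
  rw [hΨ u hu i]
  constructor
  · rintro ⟨h1, h2⟩
    exact ⟨pb_lb g hg i hu.1 h2, h1⟩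
  · rintro ⟨h1, h2⟩
    refine ⟨h2, fun k hk hcon => ?_⟩
    have := pb_mono g hg hk
    linarith

lemma pb_le_total {N : ℕ} (g : Fin N → ℝ) (hg : ∀ j, 0 ≤ g j) (i : Fin N) :
    ∑ j ∈ Finset.univ.filter (· ≤ i), g j ≤ ∑ j, g j := by
  apply Finset.sum_le_sum_of_subset_of_nonneg (Finset.filter_subset _ _)
  · intros; exact hg _

theorem stmt4 {E : Type*} [MeasurableSpace E] (μ : Measure E) [SigmaFinite μ]
    (f : E → ℝ) (hf : Measurable f) (hf0 : ∀ x, 0 ≤ f x)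
    (K : ℝ) (hK : K = ∫ x, f x ∂μ) (hKpos : 0 < K) (hfint : Integrable f μ)
    (ν : Measure (E × ℝ)) (hν : ν = μ.prod volume)
    (Γ : Set (E × ℝ)) (hΓ : Γ = {p : E × ℝ | 0 ≤ p.2 ∧ p.2 ≤ f p.1})
    (N : ℕ) (B : Fin N → Set (E × ℝ)) (hBm : ∀ i, MeasurableSet (B i))
    (hBpos : ∀ i, 0 < ν (B i))
    (hdisj : ∀ i j, i ≠ j → ν (B i ∩ B j) = 0)
    (Bu : Set (E × ℝ)) (hBu : Bu = ⋃ i, B i)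
    (hcover : ν (Γ \ Bu) = 0) (hfin : ν Bu < ⊤)
    {Ω : Type*} [MeasurableSpace Ω] (P : Measure Ω) [IsProbabilityMeasure P]
    (U : Ω → ℝ) (V : Fin N → Ω → E) (W : Fin N → Ω → ℝ)
    (hU : Measurable U) (hVW : ∀ i, Measurable (fun ω => (V i ω, W i ω)))
    (hUlaw : Measure.map U P = volume.restrict (Ico (0:ℝ) 1))
    (hVWlaw : ∀ i, Measure.map (fun ω => (V i ω, W i ω)) P
      = (ν (B i))⁻¹ • ν.restrict (B i))
    (hindep : ∀ i, IndepFun U (fun ω => (V i ω, W i ω)) P)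
    (Ψ : ℝ → Fin N)
    (hΨ : ∀ u ∈ Ico (0:ℝ) 1, ∀ i, Ψ u = i ↔
      (u < ∑ j ∈ Finset.univ.filter (· ≤ i), (ν (B j)).toReal / (ν Bu).toReal ∧
       ∀ k < i, ¬ u < ∑ j ∈ Finset.univ.filter (· ≤ k), (ν (B j)).toReal / (ν Bu).toReal))
    (Λ : Set Ω)
    (hΛ : Λ = {ω | (V (Ψ (U ω)) ω, W (Ψ (U ω)) ω) ∈ B (Ψ (U ω))
      ∧ 0 ≤ W (Ψ (U ω)) ω ∧ W (Ψ (U ω)) ω ≤ f (V (Ψ (U ω)) ω)})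
    (A : Set E) (hA : MeasurableSet A) :
    (ProbabilityTheory.cond P Λ) {ω | V (Ψ (U ω)) ω ∈ A}
      = ENNReal.ofReal ((1 / K) * ∫ x in A, f x ∂μ) := by
  -- basic facts
  have hBum : MeasurableSet Bu := hBu ▸ MeasurableSet.iUnion (fun i => hBm i)
  have hBuT : ν Bu ≠ ⊤ := hfin.ne
  have hsum : ν Bu = ∑ i, ν (B i) := by
    rw [hBu, measure_iUnion₀ (fun i j h => hdisj i j h)
      (fun i => (hBm i).nullMeasurableSet), tsum_fintype]
  have hBiT : ∀ i, ν (B i) ≠ ⊤ := fun i =>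
    (lt_of_le_of_lt (measure_mono (hBu ▸ subset_iUnion B i)) hfin).ne
  -- the region measure
  have hregion : ∀ (A' : Set E), MeasurableSet A' →
      ν {p : E × ℝ | 0 ≤ p.2 ∧ p.2 ≤ f p.1 ∧ p.1 ∈ A'}
        = ENNReal.ofReal (∫ x in A', f x ∂μ) := by
    intro A' hA'
    have hGm : MeasurableSet {p : E × ℝ | 0 ≤ p.2 ∧ p.2 ≤ f p.1 ∧ p.1 ∈ A'} := by
      refine MeasurableSet.inter ?_ (MeasurableSet.inter ?_ ?_)
      · exact measurableSet_le measurable_const measurable_snd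
      · exact measurableSet_le measurable_snd (hf.comp measurable_fst)
      · exact measurable_fst hA'
    rw [hν, Measure.prod_apply hGm]
    have heq : ∀ x, volume (Prod.mk x ⁻¹' {p : E × ℝ | 0 ≤ p.2 ∧ p.2 ≤ f p.1 ∧ p.1 ∈ A'})
        = A'.indicator (fun x => ENNReal.ofReal (f x)) x := by
      intro x
      by_cases hx : x ∈ A'
      · have : Prod.mk x ⁻¹' {p : E × ℝ | 0 ≤ p.2 ∧ p.2 ≤ f p.1 ∧ p.1 ∈ A'}
            = Icc 0 (f x) := by
          ext y; simp [hx, Icc, and_comm]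
        rw [this, Real.volume_Icc, indicator_of_mem hx, sub_zero]
      · have : Prod.mk x ⁻¹' {p : E × ℝ | 0 ≤ p.2 ∧ p.2 ≤ f p.1 ∧ p.1 ∈ A'}
            = (∅ : Set ℝ) := by
          ext y; simp [hx]
        rw [this, measure_empty, indicator_of_notMem hx]
    rw [lintegral_congr heq, lintegral_indicator hA',
      ← ofReal_integral_eq_lintegral_ofReal hfint.restrict
        (Filter.Eventually.of_forall hf0)]
  have hνΓ : ν Γ = ENNReal.ofReal K := by
    have : Γ = {p : E × ℝ | 0 ≤ p.2 ∧ p.2 ≤ f p.1 ∧ p.1 ∈ (univ : Set E)} := by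
      rw [hΓ]; ext p; simp
    rw [this, hregion univ MeasurableSet.univ, setIntegral_univ, hK]
  have hBu0 : ν Bu ≠ 0 := by
    intro h0
    have h1 : ν Γ = ν (Γ ∩ Bu) + ν (Γ \ Bu) := (measure_inter_add_diff Γ hBum).symm
    have h2 : ν (Γ ∩ Bu) ≤ ν Bu := measure_mono inter_subset_right
    rw [hcover, add_zero] at h1
    have : ν Γ = 0 := le_antisymm (h1 ▸ (h0 ▸ h2)) (zero_le)
    rw [hνΓ] at this
    simp [ENNReal.ofReal_eq_zero] at this
    linarith
  -- the cumulative sums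
  have hg0 : ∀ j : Fin N, 0 ≤ (ν (B j)).toReal / (ν Bu).toReal :=
    fun j => div_nonneg ENNReal.toReal_nonneg ENNReal.toReal_nonneg
  have hgtot : ∑ j, (ν (B j)).toReal / (ν Bu).toReal = 1 := by
    rw [← Finset.sum_div, ← ENNReal.toReal_sum (fun j _ => hBiT j), ← hsum]
    exact div_self (by simp [ENNReal.toReal_eq_zero_iff, hBu0, hBuT])
  set c : Fin N → ℝ :=
    fun i => ∑ j ∈ Finset.univ.filter (· ≤ i), (ν (B j)).toReal / (ν Bu).toReal with hc
  set L : Fin N → ℝ :=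
    fun i => ∑ j ∈ Finset.univ.filter (· < i), (ν (B j)).toReal / (ν Bu).toReal with hLdef
  have hL0 : ∀ i, 0 ≤ L i := fun i => Finset.sum_nonneg fun j _ => hg0 j
  have hc1 : ∀ i, c i ≤ 1 := fun i => hgtot ▸ pb_le_total _ hg0 i
  have hcL : ∀ i, c i = L i + (ν (B i)).toReal / (ν Bu).toReal := fun i => pb_sum_le_eq _ i
  have hchar : ∀ u ∈ Ico (0:ℝ) 1, ∀ i, Ψ u = i ↔ u ∈ Ico (L i) (c i) :=
    fun u hu i => pb_interval _ hg0 Ψ hΨ u hu i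
  have hLc : ∀ {i j : Fin N}, i < j → c i ≤ L j := fun h => pb_mono _ hg0 h
  -- projection of the uniform law
  have hmapU : ∀ s : Set ℝ, MeasurableSet s → P (U ⁻¹' s) = volume (s ∩ Ico 0 1) := by
    intro s hs
    rw [← Measure.map_apply hU hs, hUlaw, Measure.restrict_apply hs]
  have hIsub : ∀ i, Ico (L i) (c i) ⊆ Ico (0:ℝ) 1 := by
    intro i x hx
    exact ⟨le_trans (hL0 i) hx.1, lt_of_lt_of_le hx.2 (hc1 i)⟩
  set S : Fin N → Set Ω := fun i => U ⁻¹' Ico (L i) (c i) with hSdef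
  have hSm : ∀ i, MeasurableSet (S i) := by
    intro i
    show MeasurableSet (U ⁻¹' Ico (L i) (c i))
    exact hU measurableSet_Ico
  have hPS : ∀ i, P (S i) = ν (B i) / ν Bu := by
    intro i
    rw [hSdef]
    rw [hmapU _ measurableSet_Ico, inter_eq_self_of_subset_left (hIsub i),
      Real.volume_Ico, hcL i]
    have : L i + (ν (B i)).toReal / (ν Bu).toReal - L i
        = (ν (B i) / ν Bu).toReal := by
      rw [ENNReal.toReal_div]; ring
    rw [this, ENNReal.ofReal_toReal (ENNReal.div_lt_top (hBiT i) hBu0).ne]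
  have hSdisj : Pairwise (Function.onFun Disjoint S) := by
    intro i j hij
    apply Disjoint.preimage
    rw [Set.Ico_disjoint_Ico]
    rcases lt_or_gt_of_ne hij with h | h
    · calc min (c i) (c j) ≤ c i := min_le_left _ _
        _ ≤ L j := hLc h
        _ ≤ max (L i) (L j) := le_max_right _ _
    · calc min (c i) (c j) ≤ c j := min_le_right _ _
        _ ≤ L i := hLc h
        _ ≤ max (L i) (L j) := le_max_left _ _
  have hae : ∀ᵐ ω ∂P, U ω ∈ Ico (0:ℝ) 1 := by
    rw [ae_iff]
    have : {ω | ¬ U ω ∈ Ico (0:ℝ) 1} = U ⁻¹' (Ico (0:ℝ) 1)ᶜ := rfl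
    rw [this, hmapU _ measurableSet_Ico.compl, compl_inter_self, measure_empty]
  -- key computation
  have key : ∀ (A' : Set E), MeasurableSet A' →
      NullMeasurableSet (Λ ∩ {ω | V (Ψ (U ω)) ω ∈ A'}) P ∧
      P (Λ ∩ {ω | V (Ψ (U ω)) ω ∈ A'})
        = ENNReal.ofReal (∫ x in A', f x ∂μ) / ν Bu := by
    intro A' hA'
    set X : Set (E × ℝ) := {p : E × ℝ | 0 ≤ p.2 ∧ p.2 ≤ f p.1 ∧ p.1 ∈ A'} with hXdef
    have hXm : MeasurableSet X := by
      refine MeasurableSet.inter ?_ (MeasurableSet.inter ?_ ?_)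
      · exact measurableSet_le measurable_const measurable_snd
      · exact measurableSet_le measurable_snd (hf.comp measurable_fst)
      · exact measurable_fst hA'
    set C : Fin N → Set (E × ℝ) := fun i => B i ∩ X with hCdef
    have hCm : ∀ i, MeasurableSet (C i) := fun i => (hBm i).inter hXm
    set T : Fin N → Set Ω := fun i => (fun ω => (V i ω, W i ω)) ⁻¹' C i with hTdef
    have hTm : ∀ i, MeasurableSet (T i) := fun i => (hVW i) (hCm i)
    -- decomposition
    have hdecomp : Λ ∩ {ω | V (Ψ (U ω)) ω ∈ A'}
        = ⋃ i, ({ω | Ψ (U ω) = i} ∩ T i) := by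
      ext ω
      simp only [hΛ, hTdef, hCdef, hXdef, mem_inter_iff, mem_setOf_eq, mem_iUnion,
        mem_preimage]
      constructor
      · rintro ⟨⟨h1, h2, h3⟩, h4⟩
        exact ⟨Ψ (U ω), rfl, h1, h2, h3, h4⟩
      · rintro ⟨i, hi, h1, h2, h3, h4⟩
        subst hi
        exact ⟨⟨h1, h2, h3⟩, h4⟩
    -- a.e. equality with the measurable version
    have haeq : (⋃ i, ({ω | Ψ (U ω) = i} ∩ T i)) =ᵐ[P] (⋃ i, (S i ∩ T i)) := by
      filter_upwards [hae] with ω hω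
      show (ω ∈ ⋃ i, ({ω | Ψ (U ω) = i} ∩ T i)) = (ω ∈ ⋃ i, (S i ∩ T i))
      simp only [eq_iff_iff, mem_iUnion, mem_inter_iff, mem_setOf_eq, hSdef, mem_preimage]
      constructor
      · rintro ⟨i, hi, hT⟩
        exact ⟨i, (hchar (U ω) hω i).mp hi, hT⟩
      · rintro ⟨i, hi, hT⟩
        exact ⟨i, (hchar (U ω) hω i).mpr hi, hT⟩
    have hmU : MeasurableSet (⋃ i, (S i ∩ T i)) :=
      MeasurableSet.iUnion fun i => (hSm i).inter (hTm i)
    constructor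
    · rw [hdecomp]
      exact hmU.nullMeasurableSet.congr haeq.symm
    rw [hdecomp, measure_congr haeq]
    have hST : Pairwise (Function.onFun Disjoint (fun i => S i ∩ T i)) := by
      intro i j hij
      exact (hSdisj hij).mono inter_subset_left inter_subset_left
    rw [measure_iUnion hST (fun i => (hSm i).inter (hTm i)), tsum_fintype]
    -- independence
    have hterm : ∀ i, P (S i ∩ T i) = (ν (B i) / ν Bu) * ((ν (B i))⁻¹ * ν (C i)) := by
      intro i
      have h1 := (hindep i).measure_inter_preimage_eq_mul (Ico (L i) (c i)) (C i) measurableSet_Ico (hCm i)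
      have hPT : P (T i) = (ν (B i))⁻¹ * ν (C i) := by
        rw [hTdef]
        have : P ((fun ω => (V i ω, W i ω)) ⁻¹' C i)
            = Measure.map (fun ω => (V i ω, W i ω)) P (C i) :=
          (Measure.map_apply (hVW i) (hCm i)).symm
        rw [this, hVWlaw i, Measure.smul_apply, Measure.restrict_apply (hCm i),
          smul_eq_mul]
        congr 1
        rw [hCdef]
        exact congrArg ν (inter_eq_self_of_subset_left inter_subset_left)
      rw [hSdef] at *
      rw [h1, hPS i, hPT]
    rw [Finset.sum_congr rfl (fun i _ => hterm i)]
    have hsimp : ∀ i, (ν (B i) / ν Bu) * ((ν (B i))⁻¹ * ν (C i))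
        = ν (C i) * (ν Bu)⁻¹ := by
      intro i
      rw [div_eq_mul_inv]
      rw [show ν (B i) * (ν Bu)⁻¹ * ((ν (B i))⁻¹ * ν (C i))
          = (ν (B i) * (ν (B i))⁻¹) * (ν (C i) * (ν Bu)⁻¹) by ring]
      rw [ENNReal.mul_inv_cancel (hBpos i).ne' (hBiT i), one_mul]
    rw [Finset.sum_congr rfl (fun i _ => hsimp i), ← Finset.sum_mul]
    have hCsum : ∑ i, ν (C i) = ν X := by
      have h1 : (⋃ i, C i) = Bu ∩ X := by
        rw [hCdef, hBu, iUnion_inter]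
      have h2 : ν (⋃ i, C i) = ∑' i, ν (C i) :=
        measure_iUnion₀
          (fun i j hij => measure_mono_null
            (inter_subset_inter inter_subset_left inter_subset_left) (hdisj i j hij))
          (fun i => (hCm i).nullMeasurableSet)
      have h3 : ν (Bu ∩ X) = ν X := by
        have h4 : ν X = ν (X ∩ Bu) + ν (X \ Bu) := (measure_inter_add_diff X hBum).symm
        have h5 : ν (X \ Bu) = 0 := by
          apply measure_mono_null _ hcover
          intro p hp
          rw [hΓ]
          exact ⟨⟨hp.1.1, hp.1.2.1⟩, hp.2⟩
        rw [h5, add_zero, inter_comm] at h4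
        exact h4.symm
      rw [tsum_fintype] at h2; rw [← h2, h1, h3]
    rw [hCsum, hregion A' hA', div_eq_mul_inv]
  -- conclusion
  have hkeyuniv := key univ MeasurableSet.univ
  have hΛuniv : Λ ∩ {ω | V (Ψ (U ω)) ω ∈ (univ : Set E)} = Λ := by
    simp
  rw [hΛuniv] at hkeyuniv
  have hΛnull : NullMeasurableSet Λ P := hkeyuniv.1
  have hPΛ : P Λ = ENNReal.ofReal K / ν Bu := by
    rw [hkeyuniv.2, setIntegral_univ, hK]
  rw [ProbabilityTheory.cond, Measure.smul_apply, Measure.restrict_apply₀' hΛnull,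
    smul_eq_mul, inter_comm, (key A hA).2, hPΛ]
  have hK0 : ENNReal.ofReal K ≠ 0 := (ENNReal.ofReal_pos.mpr hKpos).ne'
  have hKT : ENNReal.ofReal K ≠ ⊤ := ENNReal.ofReal_ne_top
  rw [div_eq_mul_inv, div_eq_mul_inv, ENNReal.mul_inv (Or.inl hK0) (Or.inl hKT),
    inv_inv]
  rw [show (ENNReal.ofReal K)⁻¹ * ν Bu * (ENNReal.ofReal (∫ x in A, f x ∂μ) * (ν Bu)⁻¹)
      = (ν Bu * (ν Bu)⁻¹) * (ENNReal.ofReal (∫ x in A, f x ∂μ) * (ENNReal.ofReal K)⁻¹)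
      by ring]
  rw [ENNReal.mul_inv_cancel hBu0 hBuT, one_mul, ← div_eq_mul_inv,
    ← ENNReal.ofReal_div_of_pos hKpos]
  congr 1
  field_simp
end
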